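/- arXiv:2601.06641 — 2 statements merged into one kernel-verified Lean document; each statement's English description precedes it below -/
import Mathlib

section
/- Let q ~ N(k_{b_i}, sigma_i^2 I). The probability that q selects all N adversarial keys {k_{a_1},...,k_{a_N}} as its N nearest points among all keys is at most min over j in [N], l in [M−N] of Phi((k_{a_j} − k_{b_l})^T k_{b_i} / (sigma_i ||k_{a_j} − k_{b_l}||)), provided every difference k_{a_j} − k_{b_l} is nonzero and the keys have equal norms (so that nearest in Euclidean distance agrees with the half-space race condition with threshold 0). -/
open MeasureTheory ProbabilityTheory
open scoped InnerProductSpace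

/-- The cumulative distribution function of the standard normal distribution. -/
noncomputable def stdNormalCDF (x : ℝ) : ℝ :=
  (gaussianReal 0 1 (Set.Iic x)).toReal

/-- A measure on `EuclideanSpace ℝ (Fin d)` is a spherical Gaussian `N(m, σ² I)`
if every nonzero linear functional `x ↦ ⟪a, x⟫` pushes it forward to the
one-dimensional Gaussian with mean `⟪a, m⟫` and variance `σ² ‖a‖²`. -/
def IsSphericalGaussian {d : ℕ} (μ : Measure (EuclideanSpace ℝ (Fin d)))
    (m : EuclideanSpace ℝ (Fin d)) (σ : ℝ) : Prop :=
  ∀ a : EuclideanSpace ℝ (Fin d), a ≠ 0 →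
    μ.map (fun x => ⟪a, x⟫_ℝ) =
      gaussianReal (⟪a, m⟫_ℝ) (Real.toNNReal (σ ^ 2 * ‖a‖ ^ 2))

/-- Auxiliary: the standard Gaussian is invariant under negation. -/
lemma gaussianReal_map_neg' : (gaussianReal 0 1).map (fun x : ℝ => -1 * x) = gaussianReal 0 1 := by
  rw [gaussianReal_map_const_mul (-1)]
  norm_num

/-- Auxiliary: the standard Gaussian scaled and shifted. -/
lemma gaussianReal_map_affine (m c : ℝ) :
    (gaussianReal 0 1).map (fun x : ℝ => c * x + m)
      = gaussianReal m (Real.toNNReal (c ^ 2)) := by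
  have h1 : (fun x : ℝ => c * x + m) = (fun x : ℝ => x + m) ∘ (fun x : ℝ => c * x) := rfl
  rw [h1, ← Measure.map_map (measurable_add_const m) (measurable_const_mul c),
    gaussianReal_map_const_mul c, gaussianReal_map_add_const m]
  norm_num
  congr 1
  ext
  simp
  exact sq_nonneg c

/-- Auxiliary one-dimensional bound: for `N(m, c²)` with `c > 0`, the probability of
`(0, ∞)` is at most `Φ(m / c)`. -/
lemma gauss_Ioi_le (m c : ℝ) (hc : 0 < c) :
    gaussianReal m (Real.toNNReal (c ^ 2)) (Set.Ioi 0) ≤ gaussianReal 0 1 (Set.Iic (m / c)) := by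
  have h1 : gaussianReal m (Real.toNNReal (c ^ 2)) (Set.Ioi 0)
      = gaussianReal 0 1 (Set.Ioi (-(m / c))) := by
    rw [← gaussianReal_map_affine m c,
      Measure.map_apply (by fun_prop) measurableSet_Ioi]
    congr 1
    ext x
    simp only [Set.mem_preimage, Set.mem_Ioi]
    rw [show -(m / c) = (-m) / c by ring, div_lt_iff₀ hc]
    constructor <;> intro h <;> nlinarith
  have h2 : gaussianReal 0 1 (Set.Iic (m / c)) = gaussianReal 0 1 (Set.Ici (-(m / c))) := by
    conv_lhs => rw [← gaussianReal_map_neg']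
    rw [Measure.map_apply (by fun_prop) measurableSet_Iic]
    congr 1
    ext x
    simp only [Set.mem_preimage, Set.mem_Iic, Set.mem_Ici, neg_one_mul, neg_le]
  rw [h1, h2]
  exact measure_mono Set.Ioi_subset_Ici_self

/-- Lemma (cluster-flip probability bound): for a non-member query
`q ~ N(k_{b i}, σᵢ² I)`, the probability that `q` selects all `N` adversarial keys
as its `N` nearest points among all keys (all keys having equal norm `R`) is at most
`min_{j,l} Φ((k_{a j} - k_{b l})ᵀ k_{b i} / (σᵢ ‖k_{a j} - k_{b l}‖))`. -/
theorem cluster_flip_probability_bound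
    {d N L : ℕ} (hN : 0 < N) (hL : 0 < L)
    (ka : Fin N → EuclideanSpace ℝ (Fin d))
    (kb : Fin L → EuclideanSpace ℝ (Fin d))
    (R : ℝ) (hRa : ∀ j, ‖ka j‖ = R) (hRb : ∀ l, ‖kb l‖ = R)
    (hne : ∀ j l, ka j - kb l ≠ 0)
    (i : Fin L) (σi : ℝ) (hσ : 0 < σi)
    (μ : Measure (EuclideanSpace ℝ (Fin d))) [IsProbabilityMeasure μ]
    (hμ : IsSphericalGaussian μ (kb i) σi) :
    (μ {x | ∀ j l, ‖x - ka j‖ < ‖x - kb l‖}).toReal ≤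
      ⨅ j : Fin N, ⨅ l : Fin L,
        stdNormalCDF (⟪ka j - kb l, kb i⟫_ℝ / (σi * ‖ka j - kb l‖)) := by
  have : Nonempty (Fin N) := Fin.pos_iff_nonempty.mp hN
  have : Nonempty (Fin L) := Fin.pos_iff_nonempty.mp hL
  refine le_ciInf fun j => le_ciInf fun l => ?_
  set a : EuclideanSpace ℝ (Fin d) := ka j - kb l with ha
  have hanorm : 0 < ‖a‖ := norm_pos_iff.mpr (hne j l)
  have hc : 0 < σi * ‖a‖ := mul_pos hσ hanorm
  -- step 1 : set inclusion
  have hsub : {x : EuclideanSpace ℝ (Fin d) | ∀ j l, ‖x - ka j‖ < ‖x - kb l‖}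
      ⊆ {x | 0 < ⟪a, x⟫_ℝ} := by
    intro x hx
    have h := hx j l
    have h2 : ‖x - ka j‖ ^ 2 < ‖x - kb l‖ ^ 2 :=
      pow_lt_pow_left₀ h (norm_nonneg _) (by norm_num)
    rw [@norm_sub_sq_real, @norm_sub_sq_real] at h2
    have hna := hRa j
    have hnb := hRb l
    simp only [Set.mem_setOf_eq, ha, inner_sub_left]
    have hca : ⟪ka j, x⟫_ℝ = ⟪x, ka j⟫_ℝ := real_inner_comm _ _
    have hcb : ⟪kb l, x⟫_ℝ = ⟪x, kb l⟫_ℝ := real_inner_comm _ _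
    rw [hna, hnb] at h2
    linarith
  -- step 2 : rewrite as pushforward
  have hmeas : Measurable (fun x : EuclideanSpace ℝ (Fin d) => ⟪a, x⟫_ℝ) :=
    (continuous_const.inner continuous_id).measurable
  have hkey : μ {x | 0 < ⟪a, x⟫_ℝ}
      = gaussianReal (⟪a, kb i⟫_ℝ) (Real.toNNReal (σi ^ 2 * ‖a‖ ^ 2)) (Set.Ioi 0) := by
    rw [← hμ a (hne j l), Measure.map_apply hmeas measurableSet_Ioi]
    rfl
  have hvar : Real.toNNReal (σi ^ 2 * ‖a‖ ^ 2) = Real.toNNReal ((σi * ‖a‖) ^ 2) := by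
    rw [mul_pow]
  -- conclude
  have hchain : μ {x | ∀ j l, ‖x - ka j‖ < ‖x - kb l‖}
      ≤ gaussianReal 0 1 (Set.Iic (⟪a, kb i⟫_ℝ / (σi * ‖a‖))) := by
    calc μ {x | ∀ j l, ‖x - ka j‖ < ‖x - kb l‖}
        ≤ μ {x | 0 < ⟪a, x⟫_ℝ} := measure_mono hsub
      _ = gaussianReal (⟪a, kb i⟫_ℝ) (Real.toNNReal ((σi * ‖a‖) ^ 2)) (Set.Ioi 0) := by
          rw [hkey, hvar]
      _ ≤ gaussianReal 0 1 (Set.Iic (⟪a, kb i⟫_ℝ / (σi * ‖a‖))) := gauss_Ioi_le _ _ hc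
  unfold stdNormalCDF
  exact ENNReal.toReal_mono (measure_ne_top _ _) hchain
end

section
/- FPR bound for N=1 (Theorem): if each of the B non-member queries from cluster i is distributed as N(k_{b,i}, sigma_i^2 I) and the flip event requires the query to be closer to the adversarial key k_a than to every benign key (in particular its own centroid k_{b,i}), then FPR ≤ sum_i b_i · Phi(−||k_{b,i} − k_a|| / (2 sigma_i)). -/
open MeasureTheory ProbabilityTheory
open scoped InnerProductSpace

open scoped ENNReal

lemma gaussianReal_Iic_eq (m t : ℝ) {v : ℝ} (hv : 0 < v) :
    gaussianReal m v.toNNReal (Set.Iic t)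
      = ENNReal.ofReal (stdNormalCDF ((t - m) / Real.sqrt v)) := by
  have hs : (0:ℝ) < Real.sqrt v := Real.sqrt_pos.mpr hv
  have hmap : (gaussianReal 0 1).map (fun x => Real.sqrt v * x + m)
      = gaussianReal m v.toNNReal := by
    have h1 : (fun x : ℝ => Real.sqrt v * x + m) = (· + m) ∘ (Real.sqrt v * ·) := rfl
    rw [h1, ← Measure.map_map (measurable_add_const m) (measurable_const_mul _),
      gaussianReal_map_const_mul, gaussianReal_map_add_const]
    congr 1
    · ring
    · ext
      push_cast
      simp [Real.sq_sqrt hv.le, Real.coe_toNNReal _ hv.le]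
  have hpre : (fun x : ℝ => Real.sqrt v * x + m) ⁻¹' Set.Iic t
      = Set.Iic ((t - m) / Real.sqrt v) := by
    ext x
    simp only [Set.mem_preimage, Set.mem_Iic, le_div_iff₀ hs]
    constructor <;> intro h <;> nlinarith
  rw [← hmap, Measure.map_apply (by fun_prop) measurableSet_Iic, hpre, stdNormalCDF,
    ENNReal.ofReal_toReal (measure_ne_top _ _)]

/-- FPR bound for `N = 1`: if each of the `B` non-member queries from cluster `i` is
spherical Gaussian `N(k_{b i}, σᵢ² I)` and a flip requires the query to be closer to
the adversarial key `k_a` than to every benign key, then the probability that at least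
one query flips is at most `∑ i, bᵢ · Φ(-‖k_{b i} - k_a‖ / (2 σᵢ))`. -/
theorem fpr_bound_single_adversarial_key
    {Ω : Type*} [MeasurableSpace Ω] (μ : Measure Ω) [IsProbabilityMeasure μ]
    {d B K : ℕ}
    (kb : Fin K → EuclideanSpace ℝ (Fin d)) (k_a : EuclideanSpace ℝ (Fin d))
    (hka : ∀ i, k_a ≠ kb i)
    (σ : Fin K → ℝ) (hσ : ∀ i, 0 < σ i)
    (Q : Fin B → Ω → EuclideanSpace ℝ (Fin d))
    (hQmeas : ∀ j, Measurable (Q j))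
    (c : Fin B → Fin K)
    (hlaw : ∀ j, IsSphericalGaussian (μ.map (Q j)) (kb (c j)) (σ (c j))) :
    μ (⋃ j, {ω | ∀ i, ‖Q j ω - k_a‖ < ‖Q j ω - kb i‖}) ≤
      ∑ i : Fin K, ((Finset.univ.filter (fun j => c j = i)).card : ℝ≥0∞) *
        ENNReal.ofReal (stdNormalCDF (-(‖kb i - k_a‖ / (2 * σ i)))) := by
  set f : Fin K → ℝ≥0∞ :=
    fun i => ENNReal.ofReal (stdNormalCDF (-(‖kb i - k_a‖ / (2 * σ i)))) with hf
  -- Step 1: bound each single-query event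
  have hsingle : ∀ j : Fin B,
      μ {ω | ∀ i, ‖Q j ω - k_a‖ < ‖Q j ω - kb i‖} ≤ f (c j) := by
    intro j
    set m := kb (c j) with hm
    set a := m - k_a with ha
    have hane : a ≠ 0 := sub_ne_zero.mpr (Ne.symm (hka (c j)))
    have hna : (0:ℝ) < ‖a‖ := norm_pos_iff.mpr hane
    set t : ℝ := (‖m‖ ^ 2 - ‖k_a‖ ^ 2) / 2 with ht
    have hkey : ∀ x : EuclideanSpace ℝ (Fin d),
        ‖x - k_a‖ < ‖x - m‖ ↔ ⟪a, x⟫_ℝ < t := by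
      intro x
      have h1 : ‖x - k_a‖ ^ 2 = ‖x‖ ^ 2 - 2 * ⟪x, k_a⟫_ℝ + ‖k_a‖ ^ 2 :=
        norm_sub_sq_real x k_a
      have h2 : ‖x - m‖ ^ 2 = ‖x‖ ^ 2 - 2 * ⟪x, m⟫_ℝ + ‖m‖ ^ 2 :=
        norm_sub_sq_real x m
      have h3 : ⟪a, x⟫_ℝ = ⟪m, x⟫_ℝ - ⟪k_a, x⟫_ℝ := inner_sub_left m k_a x
      have h4 : ⟪m, x⟫_ℝ = ⟪x, m⟫_ℝ := real_inner_comm x m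
      have h5 : ⟪k_a, x⟫_ℝ = ⟪x, k_a⟫_ℝ := real_inner_comm x k_a
      constructor
      · intro h
        have hsq : ‖x - k_a‖ ^ 2 < ‖x - m‖ ^ 2 := by
          have := norm_nonneg (x - k_a)
          nlinarith
        rw [ht]; nlinarith
      · intro h
        have hsq : ‖x - k_a‖ ^ 2 < ‖x - m‖ ^ 2 := by rw [ht] at h; nlinarith
        have := norm_nonneg (x - m)
        nlinarith [norm_nonneg (x - k_a)]
    have hset : {ω | ∀ i, ‖Q j ω - k_a‖ < ‖Q j ω - kb i‖} ⊆
        Q j ⁻¹' {x | ⟪a, x⟫_ℝ < t} := by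
      intro ω hω
      exact (hkey (Q j ω)).mp (hω (c j))
    have hinner_meas : Measurable (fun x : EuclideanSpace ℝ (Fin d) => ⟪a, x⟫_ℝ) :=
      (continuous_const.inner continuous_id).measurable
    have hpre : {x : EuclideanSpace ℝ (Fin d) | ⟪a, x⟫_ℝ < t}
        = (fun x => ⟪a, x⟫_ℝ) ⁻¹' Set.Iio t := rfl
    have hvpos : (0:ℝ) < σ (c j) ^ 2 * ‖a‖ ^ 2 := mul_pos (pow_pos (hσ (c j)) 2) (pow_pos hna 2)
    have hμ : μ (Q j ⁻¹' {x | ⟪a, x⟫_ℝ < t})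
        = gaussianReal (⟪a, m⟫_ℝ) (Real.toNNReal (σ (c j) ^ 2 * ‖a‖ ^ 2)) (Set.Iio t) := by
      rw [← Measure.map_apply (hQmeas j) (hpre ▸ hinner_meas measurableSet_Iio),
        hpre, ← Measure.map_apply hinner_meas measurableSet_Iio, hlaw j a hane]
    calc μ {ω | ∀ i, ‖Q j ω - k_a‖ < ‖Q j ω - kb i‖}
        ≤ μ (Q j ⁻¹' {x | ⟪a, x⟫_ℝ < t}) := measure_mono hset
      _ = gaussianReal (⟪a, m⟫_ℝ) (Real.toNNReal (σ (c j) ^ 2 * ‖a‖ ^ 2)) (Set.Iio t) := hμ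
      _ ≤ gaussianReal (⟪a, m⟫_ℝ) (Real.toNNReal (σ (c j) ^ 2 * ‖a‖ ^ 2)) (Set.Iic t) :=
          measure_mono Set.Iio_subset_Iic_self
      _ = ENNReal.ofReal (stdNormalCDF ((t - ⟪a, m⟫_ℝ) / Real.sqrt (σ (c j) ^ 2 * ‖a‖ ^ 2))) :=
          gaussianReal_Iic_eq _ _ hvpos
      _ = f (c j) := by
          congr 1
          have ham : ⟪a, m⟫_ℝ = ‖m‖ ^ 2 - ⟪k_a, m⟫_ℝ := by
            rw [ha, inner_sub_left, real_inner_self_eq_norm_sq]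
          have hnorm : ‖a‖ ^ 2 = ‖m‖ ^ 2 - 2 * ⟪k_a, m⟫_ℝ + ‖k_a‖ ^ 2 := by
            rw [ha]
            have := norm_sub_sq_real m k_a
            rw [real_inner_comm k_a m] at this
            linarith
          have htm : t - ⟪a, m⟫_ℝ = -(‖a‖ ^ 2 / 2) := by rw [ht, ham, hnorm]; ring
          have hsqrt : Real.sqrt (σ (c j) ^ 2 * ‖a‖ ^ 2) = σ (c j) * ‖a‖ := by
            rw [show σ (c j) ^ 2 * ‖a‖ ^ 2 = (σ (c j) * ‖a‖) ^ 2 by ring,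
              Real.sqrt_sq (mul_nonneg (hσ (c j)).le (norm_nonneg a))]
          have hna' : ‖a‖ ≠ 0 := ne_of_gt hna
          have hσ' : σ (c j) ≠ 0 := ne_of_gt (hσ (c j))
          have hval : -(‖a‖ ^ 2 / 2) / (σ (c j) * ‖a‖)
              = -(‖kb (c j) - k_a‖ / (2 * σ (c j))) := by
            rw [← hm, ← ha]
            field_simp
          rw [htm, hsqrt, hval]
  -- Step 2: union bound and fiberwise summation
  calc μ (⋃ j, {ω | ∀ i, ‖Q j ω - k_a‖ < ‖Q j ω - kb i‖})
      ≤ ∑ j : Fin B, μ {ω | ∀ i, ‖Q j ω - k_a‖ < ‖Q j ω - kb i‖} :=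
        measure_iUnion_fintype_le _ _
    _ ≤ ∑ j : Fin B, f (c j) := Finset.sum_le_sum fun j _ => hsingle j
    _ = ∑ i : Fin K, ∑ j ∈ Finset.univ.filter (fun j => c j = i), f (c j) :=
        (Finset.sum_fiberwise Finset.univ c (fun j => f (c j))).symm
    _ = ∑ i : Fin K, ((Finset.univ.filter (fun j => c j = i)).card : ℝ≥0∞) * f i := by
        refine Finset.sum_congr rfl fun i _ => ?_
        rw [Finset.sum_congr rfl fun j hj => by
          rw [(Finset.mem_filter.mp hj).2], Finset.sum_const, nsmul_eq_mul]
end
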